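/- For any forest T, the family Ψ(T) of local maximum stable sets of T forms a greedoid on the vertex set of T. -/

import Mathlib

open Finset

variable {V : Type*}

/-- A stable (independent) set of vertices. -/
def StableSet (G : SimpleGraph V) (S : Finset V) : Prop :=
  ∀ x ∈ S, ∀ y ∈ S, ¬ G.Adj x y

/-- The closed neighborhood N[S] of a finite vertex set. -/
def closedNbhd [Fintype V] [DecidableEq V] (G : SimpleGraph V) [DecidableRel G.Adj]
    (S : Finset V) : Finset V :=
  S ∪ Finset.univ.filter (fun v => ∃ s ∈ S, G.Adj v s)

/-- Ψ(G): the family of local maximum stable sets of `G`: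
stable sets `S` that are maximum stable sets of the subgraph induced by `N[S]`. -/
def Psi [Fintype V] [DecidableEq V] (G : SimpleGraph V) [DecidableRel G.Adj] :
    Set (Finset V) :=
  {S | StableSet G S ∧
    ∀ T : Finset V, T ⊆ closedNbhd G S → StableSet G T → T.card ≤ S.card}

/-- A maximum stable set of `G`. -/
def MaximumStable (G : SimpleGraph V) (S : Finset V) : Prop :=
  StableSet G S ∧ ∀ T : Finset V, StableSet G T → T.card ≤ S.card

/-- The accessibility property of a set system. -/
def Accessible [DecidableEq V] (F : Set (Finset V)) : Prop :=
  ∀ X ∈ F, X.Nonempty → ∃ x ∈ X, X.erase x ∈ F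

/-- The exchange property of a set system. -/
def ExchangeProp [DecidableEq V] (F : Set (Finset V)) : Prop :=
  ∀ X ∈ F, ∀ Y ∈ F, X.card = Y.card + 1 → ∃ x ∈ X, x ∉ Y ∧ insert x Y ∈ F

/-- A greedoid: a nonempty set system satisfying accessibility and exchange. -/
def IsGreedoid [DecidableEq V] (F : Set (Finset V)) : Prop :=
  F.Nonempty ∧ Accessible F ∧ ExchangeProp F

/-- An accessibility chain for `S`: sets `f 1 ⊆ f 2 ⊆ ... ⊆ f |S| = S`,
with `|f j| = j` and each `f j ∈ Ψ(G)`. -/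
def HasAccessChain [Fintype V] [DecidableEq V] (G : SimpleGraph V) [DecidableRel G.Adj]
    (S : Finset V) : Prop :=
  ∃ f : ℕ → Finset V, f S.card = S ∧
    (∀ j, 1 ≤ j → j ≤ S.card → (f j).card = j ∧ f j ∈ Psi G) ∧
    (∀ j, 1 ≤ j → j < S.card → f j ⊆ f (j + 1))

/-- A matching `M` is uniquely restricted if it is the unique perfect matching of the
subgraph induced by the set of vertices it saturates. -/
def UniquelyRestricted (G : SimpleGraph V) (M : G.Subgraph) : Prop :=
  M.IsMatching ∧ ∀ M' : G.Subgraph, M'.IsMatching → M'.support = M.support →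
    M'.edgeSet = M.edgeSet

/-- A maximum matching: a matching of maximum cardinality. -/
def MaximumMatching (G : SimpleGraph V) (M : G.Subgraph) : Prop :=
  M.IsMatching ∧ ∀ M' : G.Subgraph, M'.IsMatching → M'.edgeSet.ncard ≤ M.edgeSet.ncard

/-- A cycle `c` is alternating with respect to the matching `M` if of any two incident
edges of `c` exactly one belongs to `M`. -/
def AlternatingCycle (G : SimpleGraph V) (M : G.Subgraph) {v : V} (c : G.Walk v v) : Prop :=
  c.IsCycle ∧ ∀ i : Fin c.edges.length,
    (c.edges.get i ∈ M.edgeSet ↔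
      c.edges.get ⟨(i.1 + 1) % c.edges.length,
        Nat.mod_lt _ (lt_of_le_of_lt (Nat.zero_le _) i.2)⟩ ∉ M.edgeSet)

/-- A unicyclic graph: it has a cycle, and all of its cycles have the same edge set. -/
def Unicyclic [DecidableEq V] (G : SimpleGraph V) : Prop :=
  (∃ (v : V) (c : G.Walk v v), c.IsCycle) ∧
  ∀ ⦃v : V⦄ (c : G.Walk v v) ⦃w : V⦄ (d : G.Walk w w), c.IsCycle → d.IsCycle →
    c.edges.toFinset = d.edges.toFinset

/-- The stability number α(G). -/
noncomputable def alphaNum (G : SimpleGraph V) : ℕ :=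
  sSup {n | ∃ S : Finset V, StableSet G S ∧ S.card = n}

/-- The matching number μ(G). -/
noncomputable def muNum (G : SimpleGraph V) : ℕ :=
  sSup {n | ∃ M : G.Subgraph, M.IsMatching ∧ M.edgeSet.ncard = n}

/-- A König–Egerváry graph: α(G) + μ(G) = |V(G)|. -/
def KonigEgervary (G : SimpleGraph V) [Fintype V] : Prop :=
  alphaNum G + muNum G = Fintype.card V

/-! In a bipartite graph, a stable set `S` is a local maximum stable set exactly when its
boundary `N[S] \ S` can be matched into `S`: this is Hall's theorem, because any vertex set
contains a stable subset of at least half its size. In a forest every vertex set has a vertex with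
at most one neighbour inside it, so if each vertex of `A` has two neighbours in a disjoint set `B`,
then `|A| < |B|`. For accessibility, remove from `S` a vertex that is either unmatched or the only
neighbour in `S` of some boundary vertex. For exchange, some `x ∈ X \ N[Y]` has at most one
neighbour outside `N[Y]` (otherwise `N[X]` would contain a stable set larger than `X`); adding
`x` to `Y` extends the matching by sending that neighbour to `x`. -/

theorem StableSet.mono {G : SimpleGraph V} {S T : Finset V} (hS : StableSet G S) (h : T ⊆ S) :
    StableSet G T :=
  fun x hx y hy => hS x (h hx) y (h hy)

theorem StableSet.union [DecidableEq V] {G : SimpleGraph V} {S T : Finset V}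
    (hS : StableSet G S) (hT : StableSet G T) (hST : ∀ x ∈ S, ∀ y ∈ T, ¬ G.Adj x y) :
    StableSet G (S ∪ T) := by
  intro x hx y hy hxy
  rcases mem_union.1 hx with hx | hx <;> rcases mem_union.1 hy with hy | hy
  · exact hS x hx y hy hxy
  · exact hST x hx y hy hxy
  · exact hST y hy x hx hxy.symm
  · exact hT x hx y hy hxy

theorem StableSet.insert [DecidableEq V] {G : SimpleGraph V} {S : Finset V} {x : V}
    (hS : StableSet G S) (hx : ∀ y ∈ S, ¬ G.Adj x y) : StableSet G (insert x S) := by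
  rw [insert_eq]
  refine StableSet.union ?_ hS (by simpa using hx)
  simp [StableSet]

theorem SimpleGraph.Colorable.exists_stableSet_subset_card_le_two_mul {G : SimpleGraph V}
    (hG : G.Colorable 2) (A : Finset V) : ∃ R ⊆ A, StableSet G R ∧ A.card ≤ 2 * R.card := by
  obtain ⟨c⟩ := hG
  have hclass : ∀ R : Finset V, (∀ x ∈ R, ∀ y ∈ R, c x = c y) → StableSet G R :=
    fun R h x hx y hy hxy => c.valid hxy (h x hx y hy)
  have h₀ : StableSet G (A.filter (c · = 0)) := hclass _ fun x hx y hy => by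
    simp only [mem_filter] at hx hy
    rw [hx.2, hy.2]
  have h₁ : StableSet G (A.filter (¬ c · = 0)) := hclass _ fun x hx y hy => by
    simp only [mem_filter] at hx hy
    omega
  have hcard : (A.filter (c · = 0)).card + (A.filter (¬ c · = 0)).card = A.card :=
    card_filter_add_card_filter_not _
  rcases le_total (A.filter (c · = 0)).card (A.filter (¬ c · = 0)).card with h | h
  · exact ⟨_, filter_subset _ _, h₁, by omega⟩
  · exact ⟨_, filter_subset _ _, h₀, by omega⟩

theorem SimpleGraph.IsAcyclic.exists_card_filter_adj_le_one {G : SimpleGraph V}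
    [DecidableRel G.Adj] (hG : G.IsAcyclic) {A : Finset V} (hA : A.Nonempty) :
    ∃ v ∈ A, (A.filter (G.Adj v)).card ≤ 1 := by
  have : Nonempty (A : Set V) := hA.to_subtype
  set H := G.induce (A : Set V)
  -- the first vertex of a longest path of `H` is a leaf of `H`
  obtain ⟨u, v, p, hp, hmax⟩ := SimpleGraph.Walk.exists_isPath_forall_isPath_length_le_length H
  have hsnd : ∀ w, H.Adj u w → w = p.snd := by
    intro w huw
    by_cases hw : w ∈ p.support
    · exact (hG.induce _).eq_snd_of_adj_start hp huw hw
    · have := hmax w v (p.cons huw.symm) (hp.cons hw)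
      simp at this
  refine ⟨u, u.2, card_le_one.2 fun a ha b hb => ?_⟩
  rw [mem_filter] at ha hb
  have := (hsnd ⟨a, ha.1⟩ ha.2).trans (hsnd ⟨b, hb.1⟩ hb.2).symm
  exact congrArg Subtype.val this

theorem SimpleGraph.IsAcyclic.card_lt_card_of_two_le_card_filter_adj {G : SimpleGraph V}
    [DecidableEq V] [DecidableRel G.Adj] (hG : G.IsAcyclic) {A B : Finset V}
    (hAB : Disjoint A B) (hA : A.Nonempty) (h2 : ∀ a ∈ A, 2 ≤ (B.filter (G.Adj a)).card) :
    A.card < B.card := by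
  induction B using Finset.strongInduction generalizing A with
  | H B ih =>
  obtain ⟨v, hv, hdeg⟩ := hG.exists_card_filter_adj_le_one (hA.mono subset_union_left)
  have hAv : (A.filter (G.Adj v)).card ≤ 1 :=
    (card_le_card (filter_subset_filter _ subset_union_left)).trans hdeg
  have hvB : v ∈ B := by
    refine (mem_union.1 hv).resolve_left fun hvA => ?_
    have := (h2 v hvA).trans
      (card_le_card (filter_subset_filter _ (subset_union_right (s₁ := A))))
    omega
  set A' := A.filter (fun a => ¬ G.Adj v a)
  have hcard : (A.filter (G.Adj v)).card + A'.card = A.card := card_filter_add_card_filter_not _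
  obtain ⟨a, ha⟩ := hA
  rcases A'.eq_empty_or_nonempty with hA' | hA'
  · have := (h2 a ha).trans (card_le_card (filter_subset _ B))
    rw [hA', card_empty] at hcard
    omega
  have h2' : ∀ a ∈ A', 2 ≤ ((B.erase v).filter (G.Adj a)).card := by
    intro a ha
    rw [mem_filter] at ha
    rw [filter_erase, erase_eq_of_notMem fun h => ha.2 (mem_filter.1 h).2.symm]
    exact h2 a ha.1
  have := ih _ (erase_ssubset hvB) (A := A')
    (hAB.mono (filter_subset _ _) (erase_subset _ _)) hA' h2'
  have := card_erase_of_mem hvB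
  omega

section ClosedNbhd

variable [Fintype V] [DecidableEq V] {G : SimpleGraph V} [DecidableRel G.Adj]
  {S T : Finset V} {v : V}

@[simp]
theorem mem_closedNbhd : v ∈ closedNbhd G S ↔ v ∈ S ∨ ∃ s ∈ S, G.Adj v s := by
  simp [closedNbhd]

theorem mem_closedNbhd_sdiff : v ∈ closedNbhd G S \ S ↔ v ∉ S ∧ ∃ s ∈ S, G.Adj v s := by
  rw [mem_sdiff, mem_closedNbhd]
  tauto

theorem subset_closedNbhd : S ⊆ closedNbhd G S :=
  subset_union_left

theorem mem_closedNbhd_of_adj {s : V} (hs : s ∈ S) (h : G.Adj v s) : v ∈ closedNbhd G S :=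
  mem_closedNbhd.2 (Or.inr ⟨s, hs, h⟩)

theorem closedNbhd_mono (h : T ⊆ S) : closedNbhd G T ⊆ closedNbhd G S := by
  intro v
  simp only [mem_closedNbhd]
  rintro (hv | ⟨s, hs, hvs⟩)
  exacts [Or.inl (h hv), Or.inr ⟨s, h hs, hvs⟩]

theorem closedNbhd_sdiff_subset_of_subset (hS : StableSet G S) (h : T ⊆ S) :
    closedNbhd G T \ T ⊆ closedNbhd G S \ S := by
  intro w hw
  obtain ⟨-, s, hs, hws⟩ := mem_closedNbhd_sdiff.1 hw
  exact mem_closedNbhd_sdiff.2 ⟨fun hwS => hS w hwS s (h hs) hws, s, h hs, hws⟩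

theorem empty_mem_psi : (∅ : Finset V) ∈ Psi G := by
  refine ⟨by simp [StableSet], fun T hT _ => ?_⟩
  rw [show closedNbhd G (∅ : Finset V) = ∅ by simp [closedNbhd], subset_empty] at hT
  simp [hT]

end ClosedNbhd

section BoundaryMatching

variable [Fintype V] [DecidableEq V] {G : SimpleGraph V} [DecidableRel G.Adj]
  {S T : Finset V} {f : V → V}

def IsBoundaryMatching (G : SimpleGraph V) [DecidableRel G.Adj] (S : Finset V) (f : V → V) :
    Prop :=
  (∀ w ∈ closedNbhd G S \ S, f w ∈ S ∧ G.Adj w (f w)) ∧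
    Set.InjOn f ↑(closedNbhd G S \ S)

theorem IsBoundaryMatching.exists_subset_card_eq (hf : IsBoundaryMatching G S f)
    (hT : T ⊆ closedNbhd G S) (hTst : StableSet G T) :
    ∃ P ⊆ S, P ⊆ closedNbhd G T ∧ P.card = T.card := by
  set φ : V → V := fun t => if t ∈ S then t else f t
  have hW : ∀ t ∈ T, t ∉ S → t ∈ closedNbhd G S \ S :=
    fun t ht htS => mem_sdiff.2 ⟨hT ht, htS⟩
  have hφ : Set.InjOn φ T := by
    intro t₁ h₁ t₂ h₂ h
    by_cases hs₁ : t₁ ∈ S <;> by_cases hs₂ : t₂ ∈ S <;>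
      simp only [φ, hs₁, hs₂, if_true, if_false] at h
    · exact h
    · exact absurd (h ▸ (hf.1 t₂ (hW t₂ h₂ hs₂)).2) (hTst t₂ h₂ t₁ h₁)
    · exact absurd (h.symm ▸ (hf.1 t₁ (hW t₁ h₁ hs₁)).2) (hTst t₁ h₁ t₂ h₂)
    · exact hf.2 (hW t₁ h₁ hs₁) (hW t₂ h₂ hs₂) h
  have hφmem : ∀ t ∈ T, φ t ∈ S ∧ φ t ∈ closedNbhd G T := by
    intro t ht
    by_cases hs : t ∈ S
    · simp only [φ, if_pos hs]
      exact ⟨hs, subset_closedNbhd ht⟩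
    · obtain ⟨hfS, hadj⟩ := hf.1 t (hW t ht hs)
      simp only [φ, if_neg hs]
      exact ⟨hfS, mem_closedNbhd_of_adj ht hadj.symm⟩
  exact ⟨T.image φ, image_subset_iff.2 fun t ht => (hφmem t ht).1,
    image_subset_iff.2 fun t ht => (hφmem t ht).2, card_image_of_injOn hφ⟩

theorem mem_psi_of_isBoundaryMatching (hS : StableSet G S) (hf : IsBoundaryMatching G S f) :
    S ∈ Psi G := by
  refine ⟨hS, fun T hT hTst => ?_⟩
  obtain ⟨P, hPS, -, hP⟩ := hf.exists_subset_card_eq hT hTst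
  exact hP ▸ card_le_card hPS

theorem card_le_card_filter_adj_of_mem_psi (hG : G.Colorable 2) (hS : S ∈ Psi G)
    {A : Finset V} (hA : A ⊆ closedNbhd G S \ S) :
    A.card ≤ (S.filter fun s => ∃ a ∈ A, G.Adj a s).card := by
  set B := S.filter fun s => ∃ a ∈ A, G.Adj a s
  have hBS : B ⊆ S := filter_subset _ _
  by_contra! hlt
  -- then trading `B` in `S` for a stable `R ⊆ A ∪ B` with `|R| > |B|` beats `S` inside `N[S]`
  have hAS : Disjoint A S := disjoint_of_subset_left hA sdiff_disjoint
  obtain ⟨R, hRAB, hRst, hRcard⟩ := hG.exists_stableSet_subset_card_le_two_mul (A ∪ B)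
  rw [card_union_of_disjoint (hAS.mono_right hBS)] at hRcard
  have hRS : Disjoint (S \ B) R := by
    refine disjoint_left.2 fun x hx hxR => ?_
    rcases mem_union.1 (hRAB hxR) with hxA | hxB
    exacts [disjoint_left.1 hAS hxA (mem_sdiff.1 hx).1, (mem_sdiff.1 hx).2 hxB]
  have hcross : ∀ x ∈ S \ B, ∀ r ∈ R, ¬ G.Adj x r := by
    intro x hx r hr hxr
    rw [mem_sdiff] at hx
    rcases mem_union.1 (hRAB hr) with hrA | hrB
    · exact hx.2 (mem_filter.2 ⟨hx.1, r, hrA, hxr.symm⟩)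
    · exact hS.1 x hx.1 r (mem_filter.1 hrB).1 hxr
  have hsub : (S \ B) ∪ R ⊆ closedNbhd G S :=
    union_subset (sdiff_subset.trans subset_closedNbhd) (hRAB.trans
      (union_subset (hA.trans sdiff_subset) (hBS.trans subset_closedNbhd)))
  have hT := hS.2 _ hsub ((hS.1.mono sdiff_subset).union hRst hcross)
  rw [card_union_of_disjoint hRS] at hT
  have := card_sdiff_add_card_eq_card hBS
  omega

theorem exists_isBoundaryMatching_of_mem_psi (hG : G.Colorable 2) (hS : S ∈ Psi G) :
    ∃ f, IsBoundaryMatching G S f := by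
  have hHall (s : Finset {w // w ∈ closedNbhd G S \ S}) :
      s.card ≤ (s.biUnion fun w => S.filter (G.Adj w)).card := by
    have := card_le_card_filter_adj_of_mem_psi hG hS (A := s.map (.subtype _)) fun x hx => by
      obtain ⟨⟨y, hy⟩, -, rfl⟩ := mem_map.1 hx
      exact hy
    convert this using 2
    · simp
    · ext x
      simp only [mem_biUnion, mem_filter, mem_map, Function.Embedding.coe_subtype]
      constructor
      · rintro ⟨a, ha, hx, hax⟩
        exact ⟨hx, a, ⟨a, ha, rfl⟩, hax⟩
      · rintro ⟨hx, _, ⟨a, ha, rfl⟩, hax⟩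
        exact ⟨a, ha, hx, hax⟩
  obtain ⟨g, hinj, hg⟩ := (all_card_le_biUnion_card_iff_exists_injective _).1 hHall
  refine ⟨fun v => if h : v ∈ closedNbhd G S \ S then g ⟨v, h⟩ else v, fun w hw => ?_,
    fun w₁ hw₁ w₂ hw₂ h => ?_⟩
  · simp only [dif_pos hw]
    exact mem_filter.1 (hg ⟨w, hw⟩)
  · rw [mem_coe] at hw₁ hw₂
    simp only [dif_pos hw₁, dif_pos hw₂] at h
    exact congrArg Subtype.val (hinj h)

theorem mem_psi_iff_exists_isBoundaryMatching (hG : G.Colorable 2) :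
    S ∈ Psi G ↔ StableSet G S ∧ ∃ f, IsBoundaryMatching G S f :=
  ⟨fun hS => ⟨hS.1, exists_isBoundaryMatching_of_mem_psi hG hS⟩,
    fun ⟨hS, _, hf⟩ => mem_psi_of_isBoundaryMatching hS hf⟩

end BoundaryMatching

section Greedoid

variable [Fintype V] [DecidableEq V] {G : SimpleGraph V} [DecidableRel G.Adj]
  {S X Y : Finset V} {f : V → V}

theorem IsBoundaryMatching.erase (hS : StableSet G S) (hf : IsBoundaryMatching G S f) {v : V}
    (hv : ∀ w ∈ closedNbhd G (S.erase v) \ S.erase v, f w ≠ v) :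
    IsBoundaryMatching G (S.erase v) f := by
  have hsub := closedNbhd_sdiff_subset_of_subset hS (erase_subset v S)
  refine ⟨fun w hw => ?_, hf.2.mono (by exact_mod_cast hsub)⟩
  obtain ⟨hfw, hadj⟩ := hf.1 w (hsub hw)
  exact ⟨mem_erase.2 ⟨hv w hw, hfw⟩, hadj⟩

theorem IsBoundaryMatching.insert (hf : IsBoundaryMatching G S f) {x : V}
    (hx : x ∉ closedNbhd G S) (hdeg : ((closedNbhd G S)ᶜ.filter (G.Adj x)).card ≤ 1) :
    IsBoundaryMatching G (insert x S) fun w => if w ∈ closedNbhd G S then f w else x := by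
  have hxS : x ∉ S := fun h => hx (subset_closedNbhd h)
  have hold : ∀ w ∈ closedNbhd G (Insert.insert x S) \ Insert.insert x S,
      w ∈ closedNbhd G S → w ∈ closedNbhd G S \ S := fun w hw hwS =>
    mem_sdiff.2 ⟨hwS, fun h => (mem_sdiff.1 hw).2 (mem_insert_of_mem h)⟩
  have hnew : ∀ w ∈ closedNbhd G (Insert.insert x S) \ Insert.insert x S,
      w ∉ closedNbhd G S → w ∈ (closedNbhd G S)ᶜ.filter (G.Adj x) := by
    intro w hw hwS
    obtain ⟨-, s, hs, hws⟩ := mem_closedNbhd_sdiff.1 hw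
    obtain rfl | hs := mem_insert.1 hs
    · exact mem_filter.2 ⟨mem_compl.2 hwS, hws.symm⟩
    · exact absurd (mem_closedNbhd_of_adj hs hws) hwS
  refine ⟨fun w hw => ?_, fun w₁ hw₁ w₂ hw₂ h => ?_⟩
  · by_cases hwS : w ∈ closedNbhd G S
    · obtain ⟨hfw, hadj⟩ := hf.1 w (hold w hw hwS)
      simp only [if_pos hwS]
      exact ⟨mem_insert_of_mem hfw, hadj⟩
    · simp only [if_neg hwS]
      exact ⟨mem_insert_self x S, (mem_filter.1 (hnew w hw hwS)).2.symm⟩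
  · rw [mem_coe] at hw₁ hw₂
    by_cases h₁ : w₁ ∈ closedNbhd G S <;> by_cases h₂ : w₂ ∈ closedNbhd G S <;>
      simp only [h₁, h₂, if_true, if_false] at h
    · exact hf.2 (hold w₁ hw₁ h₁) (hold w₂ hw₂ h₂) h
    · exact absurd (h ▸ (hf.1 w₁ (hold w₁ hw₁ h₁)).1) hxS
    · exact absurd (h ▸ (hf.1 w₂ (hold w₂ hw₂ h₂)).1) hxS
    · exact card_le_one.1 hdeg w₁ (hnew w₁ hw₁ h₁) w₂ (hnew w₂ hw₂ h₂)

theorem psi_accessible (hG : G.IsAcyclic) : Accessible (Psi G) := by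
  intro S hS hne
  obtain ⟨hSst, f, hf⟩ := (mem_psi_iff_exists_isBoundaryMatching hG.colorable_two).1 hS
  suffices ∃ v ∈ S, ∀ w ∈ closedNbhd G (S.erase v) \ S.erase v, f w ≠ v by
    obtain ⟨v, hv, hfv⟩ := this
    exact ⟨v, hv,
      mem_psi_of_isBoundaryMatching (hSst.mono (erase_subset v S)) (hf.erase hSst hfv)⟩
  have hsub v := closedNbhd_sdiff_subset_of_subset hSst (erase_subset v S)
  by_cases hcov : S ⊆ (closedNbhd G S \ S).image f
  · -- then some boundary vertex `w₀` has `f w₀` as its only neighbour in `S`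
    obtain ⟨w₀, hw₀, hdeg⟩ :
        ∃ w₀ ∈ closedNbhd G S \ S, (S.filter (G.Adj w₀)).card ≤ 1 := by
      by_contra! h
      have := hG.card_lt_card_of_two_le_card_filter_adj sdiff_disjoint
        (hne.mono hcov).of_image h
      have := (card_le_card hcov).trans card_image_le
      omega
    obtain ⟨hfw₀, hadj₀⟩ := hf.1 w₀ hw₀
    refine ⟨f w₀, hfw₀, fun w hw hfw => ?_⟩
    obtain ⟨-, s, hs, hws⟩ := mem_closedNbhd_sdiff.1 hw
    obtain rfl := hf.2 (hsub _ hw) hw₀ hfw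
    obtain ⟨hsw, hsS⟩ := mem_erase.1 hs
    exact hsw <|
      card_le_one.1 hdeg s (mem_filter.2 ⟨hsS, hws⟩) _ (mem_filter.2 ⟨hfw₀, hadj₀⟩)
  · obtain ⟨v, hvS, hv⟩ := not_subset.1 hcov
    exact ⟨v, hvS, fun w hw hfw => hv (hfw ▸ mem_image_of_mem f (hsub v hw))⟩

theorem SimpleGraph.IsAcyclic.exists_stableSet_card_lt (hG : G.IsAcyclic) {D U : Finset V}
    (hD : StableSet G D) (hDU : D ⊆ U) (hne : D.Nonempty)
    (h2 : ∀ x ∈ D, 2 ≤ (U.filter (G.Adj x)).card) :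
    ∃ R ⊆ closedNbhd G D ∩ U, StableSet G R ∧ D.card < R.card := by
  have hD' : D ⊆ closedNbhd G D ∩ U := subset_inter subset_closedNbhd hDU
  have hnbr :
      ∀ x ∈ D, U.filter (G.Adj x) ⊆ ((closedNbhd G D ∩ U) \ D).filter (G.Adj x) := by
    intro x hx y hy
    rw [mem_filter] at hy ⊢
    exact ⟨mem_sdiff.2 ⟨mem_inter.2 ⟨mem_closedNbhd_of_adj hx hy.2.symm, hy.1⟩,
      fun hyD => hD x hx y hyD hy.2⟩, hy.2⟩
  have hlt := hG.card_lt_card_of_two_le_card_filter_adj disjoint_sdiff hne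
    fun x hx => (h2 x hx).trans (card_le_card (hnbr x hx))
  obtain ⟨R, hR, hRst, hRcard⟩ :=
    hG.colorable_two.exists_stableSet_subset_card_le_two_mul (closedNbhd G D ∩ U)
  have := card_sdiff_add_card_eq_card hD'
  exact ⟨R, hR, hRst, by omega⟩

theorem exists_mem_sdiff_closedNbhd_card_filter_adj_le_one (hG : G.IsAcyclic) (hX : X ∈ Psi G)
    (hY : Y ∈ Psi G) (hXY : Y.card < X.card) :
    ∃ x ∈ X \ closedNbhd G Y, ((closedNbhd G Y)ᶜ.filter (G.Adj x)).card ≤ 1 := by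
  obtain ⟨hYst, g, hg⟩ := (mem_psi_iff_exists_isBoundaryMatching hG.colorable_two).1 hY
  have hsplit := card_inter_add_card_sdiff X (closedNbhd G Y)
  have hne : (X \ closedNbhd G Y).Nonempty := by
    have := hY.2 _ inter_subset_right (hX.1.mono inter_subset_left)
    exact card_pos.1 (by omega)
  by_contra! h
  -- otherwise `N[X]` contains a stable set larger than `X`
  obtain ⟨R, hR, hRst, hRcard⟩ := hG.exists_stableSet_card_lt (hX.1.mono sdiff_subset)
    (fun x hx => mem_compl.2 (mem_sdiff.1 hx).2) hne h
  obtain ⟨P, hPY, hPX, hPcard⟩ := hg.exists_subset_card_eq inter_subset_right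
    (hX.1.mono (inter_subset_left (s₂ := closedNbhd G Y)))
  have hRY : ∀ r ∈ R, r ∉ closedNbhd G Y := fun r hr => mem_compl.1 (mem_inter.1 (hR hr)).2
  have hPR : Disjoint P R :=
    disjoint_left.2 fun p hp hpR => hRY p hpR (subset_closedNbhd (hPY hp))
  have hsub : P ∪ R ⊆ closedNbhd G X :=
    union_subset (hPX.trans (closedNbhd_mono inter_subset_left))
      (hR.trans (inter_subset_left.trans (closedNbhd_mono sdiff_subset)))
  have hPRst : StableSet G (P ∪ R) := (hYst.mono hPY).union hRst
    fun p hp r hr hpr => hRY r hr (mem_closedNbhd_of_adj (hPY hp) hpr.symm)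
  have := hX.2 _ hsub hPRst
  rw [card_union_of_disjoint hPR] at this
  omega

theorem psi_exchange (hG : G.IsAcyclic) : ExchangeProp (Psi G) := by
  intro X hX Y hY hXY
  obtain ⟨hYst, g, hg⟩ := (mem_psi_iff_exists_isBoundaryMatching hG.colorable_two).1 hY
  obtain ⟨x, hx, hdeg⟩ := exists_mem_sdiff_closedNbhd_card_filter_adj_le_one hG hX hY (by omega)
  obtain ⟨hxX, hxY⟩ := mem_sdiff.1 hx
  refine ⟨x, hxX, fun h => hxY (subset_closedNbhd h), mem_psi_of_isBoundaryMatching ?_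
    (hg.insert hxY hdeg)⟩
  exact hYst.insert fun y hy hxy => hxY (mem_closedNbhd_of_adj hy hxy)

end Greedoid

/-- For any forest `T`, the family Ψ(T) is a greedoid on its vertex set. -/
theorem psi_forest_greedoid [Fintype V] [DecidableEq V] (G : SimpleGraph V)
    [DecidableRel G.Adj] (hG : G.IsAcyclic) : IsGreedoid (Psi G) :=
  ⟨⟨∅, empty_mem_psi⟩, psi_accessible hG, psi_exchange hG⟩
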